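/- Let d ≥ 2 and let M be a d×d complex matrix such that for every t ∈ {1,...,d−1} the Fourier vector v_t (with (v_t)_j = ω^{tj}, ω = e^{2πi/d}) satisfies both ⟨v_t, M u⟩ = 0 and ⟨u, M v_t⟩ = 0, where u = Σ_j e_j is the all-ones vector, and moreover ⟨v_s, M v_t⟩ = 0 for all distinct s, t ∈ {1,...,d−1}, ⟨e_0, M e_{d−1}⟩ = ⟨e_{d−1}, M e_0⟩ = 0, and ⟨e_q, M e_{d−1}⟩ = ⟨e_{d−1}, M e_q⟩ = 0 for 1 ≤ q ≤ d−2. Then M is a scalar multiple of the identity. -/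

import Mathlib

/-!
The Fourier vectors are the columns of `F j t = ψ (j * t)` for the primitive additive character
`ψ a = ω ^ a` of `Fin d`, and character orthogonality gives `F * Fᴴ = d • 1`. The Fourier
conditions say that `Fᴴ * M * F` is a diagonal matrix `D`, so the entries of `d² • M = F * D * Fᴴ`
depend only on `j - k`: `M` is circulant. A circulant matrix is determined by any one of its rows,
and the stopper conditions make the last row vanish off the diagonal, so `M` is scalar.
-/

open Matrix

namespace AddChar

variable {R K : Type*} [CommRing R]

section Field

variable [Field K]

def fourierMatrix (ψ : AddChar R K) : Matrix R R K :=
  of fun j t => ψ (j * t)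

@[simp]
lemma fourierMatrix_apply (ψ : AddChar R K) (j t : R) : ψ.fourierMatrix j t = ψ (j * t) := rfl

variable [Fintype R] [DecidableEq R]

lemma fourierMatrix_mul_fourierMatrix_inv {ψ : AddChar R K} (hψ : ψ.IsPrimitive) :
    ψ.fourierMatrix * ψ⁻¹.fourierMatrix = (Fintype.card R : K) • 1 := by
  refine Matrix.ext fun j k => ?_
  have hterm : ∀ t, ψ (j * t) * ψ⁻¹ (t * k) = ψ (t * (j - k)) := fun t => by
    rw [inv_apply, ← map_add_eq_mul]; ring_nf
  simp only [Matrix.mul_apply, fourierMatrix_apply, hterm, sum_mulShift _ hψ, Matrix.smul_apply,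
    Matrix.one_apply, sub_eq_zero, smul_eq_mul]
  split_ifs <;> simp

lemma fourierMatrix_mul_diagonal_mul_fourierMatrix_inv (ψ : AddChar R K) (g : R → K) :
    ψ.fourierMatrix * diagonal g * ψ⁻¹.fourierMatrix = circulant fun x => ∑ t, g t * ψ (x * t) := by
  refine Matrix.ext fun j k => ?_
  simp only [Matrix.mul_apply, fourierMatrix_apply, diagonal_apply, mul_ite, mul_zero,
    Finset.sum_ite_eq', Finset.mem_univ, if_true, inv_apply, circulant_apply]
  refine Finset.sum_congr rfl fun t _ => ?_
  rw [sub_mul, sub_eq_add_neg, map_add_eq_mul]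
  ring_nf

lemma exists_eq_circulant_of_isDiag {ψ : AddChar R K} (hψ : ψ.IsPrimitive)
    (hR : (Fintype.card R : K) ≠ 0) {M : Matrix R R K}
    (hM : (ψ⁻¹.fourierMatrix * M * ψ.fourierMatrix).IsDiag) : ∃ c, M = circulant c := by
  set g := (ψ⁻¹.fourierMatrix * M * ψ.fourierMatrix).diag
  have hM' : (Fintype.card R : K) ^ 2 • M = circulant fun x => ∑ t, g t * ψ (x * t) := by
    rw [← fourierMatrix_mul_diagonal_mul_fourierMatrix_inv, hM.diagonal_diag, ← mul_assoc,
      ← mul_assoc, fourierMatrix_mul_fourierMatrix_inv hψ, mul_assoc,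
      fourierMatrix_mul_fourierMatrix_inv hψ]
    simp [smul_smul, sq]
  refine ⟨((Fintype.card R : K) ^ 2)⁻¹ • fun x => ∑ t, g t * ψ (x * t), ?_⟩
  rw [circulant_smul, ← hM', inv_smul_smul₀ (pow_ne_zero 2 hR)]

end Field

lemma conjTranspose_fourierMatrix [Finite R] [RCLike K] (ψ : AddChar R K) : ψ.fourierMatrixᴴ = ψ⁻¹.fourierMatrix := by
  ext j t
  rw [conjTranspose_apply, fourierMatrix_apply, fourierMatrix_apply, inv_apply,
    map_neg_eq_conj, mul_comm]
  rfl

end AddChar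

lemma Matrix.circulant_eq_scalar_of_row_eq_zero {n α : Type*} [AddCommGroup n] [Fintype n]
    [DecidableEq n] [Semiring α] {c : n → α} (r : n) (h : ∀ q, q ≠ r → circulant c r q = 0) :
    circulant c = scalar n (c 0) := by
  suffices hc : c = Pi.single 0 (c 0) by rw [hc, circulant_single, Pi.single_eq_same]
  funext x
  by_cases hx : x = 0
  · simp [hx]
  · rw [Pi.single_eq_of_ne hx, ← sub_sub_cancel r x]
    exact h _ (by simpa using hx)

section FinAddChar

open scoped Fin.CommRing

variable {d : ℕ} [NeZero d] {M : Type*} [CommMonoid M] {ω : M}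

def IsPrimitiveRoot.finAddChar (hω : IsPrimitiveRoot ω d) : AddChar (Fin d) M where
  toFun a := ω ^ (a : ℕ)
  map_zero_eq_one' := by simp
  map_add_eq_mul' a b := by rw [Fin.val_add, ← pow_eq_pow_mod _ hω.pow_eq_one, pow_add]

lemma IsPrimitiveRoot.finAddChar_mul (hω : IsPrimitiveRoot ω d) (a b : Fin d) :
    hω.finAddChar (a * b) = ω ^ ((a : ℕ) * b) := by
  simp only [finAddChar, AddChar.coe_mk, Fin.val_mul, ← pow_eq_pow_mod _ hω.pow_eq_one]

lemma IsPrimitiveRoot.finAddChar_isPrimitive (hω : IsPrimitiveRoot ω d) :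
    hω.finAddChar.IsPrimitive := by
  intro a ha hψ
  have h1 : ω ^ (a : ℕ) = ω ^ 0 := by
    simpa [finAddChar] using DFunLike.congr_fun hψ 1
  exact ha (Fin.ext (hω.pow_inj a.isLt (NeZero.pos d) h1))

lemma IsPrimitiveRoot.exists_eq_circulant_of_dft_orthogonal {ω : ℂ} (hω : IsPrimitiveRoot ω d)
    {A : Matrix (Fin d) (Fin d) ℂ}
    (hA : ∀ s t : Fin d, s ≠ t →
      ∑ j : Fin d, starRingEnd ℂ (ω ^ ((s : ℕ) * (j : ℕ))) *
        (A *ᵥ fun k : Fin d => ω ^ ((t : ℕ) * (k : ℕ))) j = 0) :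
    ∃ c, A = circulant c := by
  refine hω.finAddChar.exists_eq_circulant_of_isDiag hω.finAddChar_isPrimitive
    (by simp [NeZero.ne d]) ?_
  rw [← AddChar.conjTranspose_fourierMatrix]
  intro s t hst
  have hcol : hω.finAddChar.fourierMatrixᵀ t = fun k : Fin d => ω ^ ((t : ℕ) * (k : ℕ)) := by
    ext k
    rw [transpose_apply, AddChar.fourierMatrix_apply, hω.finAddChar_mul, mul_comm]
  rw [mul_mul_apply, hcol, ← hA s t hst]
  refine Finset.sum_congr rfl fun j _ => ?_
  rw [conjTranspose_apply, AddChar.fourierMatrix_apply, hω.finAddChar_mul, mul_comm (j : ℕ)]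
  rfl

end FinAddChar

theorem stopper_orthogonality_conditions_force_scalar (d : ℕ) (hd : 2 ≤ d)
    (ω : ℂ) (hω : ω = Complex.exp (2 * Real.pi * Complex.I / d))
    (v : Fin d → Fin d → ℂ) (hv : ∀ t j, v t j = ω ^ ((t : ℕ) * (j : ℕ)))
    (u : Fin d → ℂ) (hu : ∀ j, u j = 1)
    (e : Fin d → Fin d → ℂ) (he : ∀ k j, e k j = if j = k then 1 else 0)
    (M : Matrix (Fin d) (Fin d) ℂ)
    (hstop : ∀ t : Fin d, 1 ≤ (t : ℕ) →
      (∑ j : Fin d, (starRingEnd ℂ) (v t j) * M.mulVec u j = 0) ∧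
      (∑ j : Fin d, (starRingEnd ℂ) (u j) * M.mulVec (v t) j = 0))
    (hfour : ∀ s t : Fin d, 1 ≤ (s : ℕ) → 1 ≤ (t : ℕ) → s ≠ t →
      ∑ j : Fin d, (starRingEnd ℂ) (v s j) * M.mulVec (v t) j = 0)
    (h0' : ∑ j : Fin d, (starRingEnd ℂ) (e ⟨d - 1, by omega⟩ j) * M.mulVec (e ⟨0, by omega⟩) j = 0)
    (hq : ∀ q : Fin d, 1 ≤ (q : ℕ) → (q : ℕ) ≤ d - 2 →
      (∑ j : Fin d, (starRingEnd ℂ) (e q j) * M.mulVec (e ⟨d - 1, by omega⟩) j = 0) ∧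
      (∑ j : Fin d, (starRingEnd ℂ) (e ⟨d - 1, by omega⟩ j) * M.mulVec (e q) j = 0)) :
    ∃ c : ℂ, M = c • (1 : Matrix (Fin d) (Fin d) ℂ) := by
  have : NeZero d := ⟨by omega⟩
  have hprim : IsPrimitiveRoot ω d := hω ▸ Complex.isPrimitiveRoot_exp d (NeZero.ne d)
  obtain rfl : v = fun t j : Fin d => ω ^ ((t : ℕ) * (j : ℕ)) := funext₂ hv
  obtain rfl : u = fun _ => 1 := funext hu
  obtain ⟨c, rfl⟩ := hprim.exists_eq_circulant_of_dft_orthogonal fun s t hst => by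
    rcases Nat.eq_zero_or_pos s with hs | hs <;> rcases Nat.eq_zero_or_pos t with ht | ht
    · exact absurd (Fin.ext (hs.trans ht.symm)) hst
    · simpa [hs] using (hstop t ht).2
    · simpa [ht] using (hstop s hs).1
    · exact hfour s t hs ht hst
  have hentry : ∀ a b, ∑ j, starRingEnd ℂ (e a j) * (circulant c *ᵥ e b) j = circulant c a b := by
    intro a b
    simp [he, Matrix.mulVec, dotProduct]
  refine ⟨c 0, ?_⟩
  rw [circulant_eq_scalar_of_row_eq_zero ⟨d - 1, by omega⟩ fun q hqr => ?_, scalar_apply,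
    smul_one_eq_diagonal]
  rw [← hentry]
  rcases Nat.eq_zero_or_pos q with hq0 | hq0
  · rwa [show q = ⟨0, by omega⟩ from Fin.ext hq0]
  · have hq1 : (q : ℕ) ≠ d - 1 := fun h => hqr (Fin.ext h)
    exact (hq q hq0 (by omega)).2
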